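/- For any two vertices a, b of Γ, the ℂ-vector space e_a A(Γ) e_b has dimension 2 if a = b, dimension 1 if a and b are adjacent in Γ, and dimension 0 otherwise. -/

import Mathlib

/-!
The zigzag algebra `A(Γ)` of a finite simple graph `Γ`, presented as a quotient of the
free algebra on generators `{e_a : a ∈ V} ∪ {x_{ab} : a,b adjacent}`.
-/

noncomputable section

/-- Generators of the zigzag algebra: one idempotent `e_a` per vertex `a`, and one
generator `x_{ab}` (the arrow `a → b` in the double quiver) per ordered adjacent pair. -/
def ZigzagGen {V : Type} (G : SimpleGraph V) : Type :=
  V ⊕ {p : V × V // G.Adj p.1 p.2}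

/-- The idempotent generator `e_a` inside the free algebra. -/
def zge (k : Type) [CommRing k] {V : Type} (G : SimpleGraph V) (a : V) :
    FreeAlgebra k (ZigzagGen G) :=
  FreeAlgebra.ι k (Sum.inl a)

/-- The arrow generator `x_{ab}` inside the free algebra. -/
def zgx (k : Type) [CommRing k] {V : Type} (G : SimpleGraph V) {a b : V} (h : G.Adj a b) :
    FreeAlgebra k (ZigzagGen G) :=
  FreeAlgebra.ι k (Sum.inr ⟨(a, b), h⟩)

/-- The defining relations of the zigzag algebra `A(Γ)`:
`e_a e_b = δ_{ab} e_a`, `Σ_a e_a = 1`, `e_b x_{ab} = x_{ab} = x_{ab} e_a`,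
`x_{bc} x_{ab} = 0` for `c ≠ a`, and `x_{ba} x_{ab} = x_{ca} x_{ac}`. -/
inductive ZigzagRel (k : Type) [CommRing k] {V : Type} [Fintype V] (G : SimpleGraph V) :
    FreeAlgebra k (ZigzagGen G) → FreeAlgebra k (ZigzagGen G) → Prop
  | idem (a : V) : ZigzagRel k G (zge k G a * zge k G a) (zge k G a)
  | orth (a b : V) (h : a ≠ b) : ZigzagRel k G (zge k G a * zge k G b) 0
  | sum_one : ZigzagRel k G (∑ a : V, zge k G a) 1
  | target_id {a b : V} (h : G.Adj a b) :
      ZigzagRel k G (zge k G b * zgx k G h) (zgx k G h)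
  | source_id {a b : V} (h : G.Adj a b) :
      ZigzagRel k G (zgx k G h * zge k G a) (zgx k G h)
  | comp_zero {a b c : V} (h₁ : G.Adj a b) (h₂ : G.Adj b c) (hca : c ≠ a) :
      ZigzagRel k G (zgx k G h₂ * zgx k G h₁) 0
  | zigzag {a b c : V} (hab : G.Adj a b) (hac : G.Adj a c) :
      ZigzagRel k G (zgx k G hab.symm * zgx k G hab) (zgx k G hac.symm * zgx k G hac)

/-- The zigzag algebra `A(Γ)`. -/
abbrev ZigzagAlgebra (k : Type) [CommRing k] {V : Type} [Fintype V] (G : SimpleGraph V) : Type :=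
  RingQuot (ZigzagRel k G)

/-- The idempotent `e_a` of the zigzag algebra. -/
def ZigzagAlgebra.e (k : Type) [CommRing k] {V : Type} [Fintype V] (G : SimpleGraph V)
    (a : V) : ZigzagAlgebra k G :=
  RingQuot.mkAlgHom k (ZigzagRel k G) (zge k G a)


/-!
The elements `e_a`, `x_d` (`d` a dart of `Γ`) and `ω_a = x_{ba} x_{ab}` form a basis of `A(Γ)`.
They span: their span contains `1 = Σ e_a` and is stable under left multiplication by the
generators. The one product that is not visibly a basis element or `0` is
`x_{ab} ω_a = x_{ab} x_{ba} x_{ab}`; as `Γ` is connected with more than two vertices, some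
`c ∉ {a, b}` is adjacent to `a` or to `b`, and the zigzag relation turns the product into
`x_{ab} x_{ca} x_{ac}` or `x_{cb} x_{bc} x_{ab}`, both `0`. They are linearly independent because
`A(Γ)` acts on the free module on these symbols by the expected left multiplication rules, and
each of them sends `Σ e_a` to its own symbol. Finally `e_a p e_b` is `p` or `0` for each basis
element `p`, so `e_a A(Γ) e_b` has as basis the elements from `b` to `a`: `e_a` and `ω_a` if
`a = b`, `x_{ba}` if `a` and `b` are adjacent, and none otherwise.
-/

theorem SimpleGraph.Connected.exists_adj_of_two_lt_card {V : Type} [Fintype V]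
    {G : SimpleGraph V} (hconn : G.Connected) (hcard : 2 < Fintype.card V) (a b : V) :
    ∃ c, c ≠ a ∧ c ≠ b ∧ (G.Adj a c ∨ G.Adj b c) := by
  classical
  obtain ⟨c, -, hc⟩ : ∃ c ∈ Finset.univ, c ∉ ({a, b} : Finset V) :=
    Finset.exists_mem_notMem_of_card_lt_card (Finset.card_le_two.trans_lt hcard)
  obtain ⟨w⟩ := hconn.preconnected a c
  obtain ⟨d, -, hd, hdc⟩ := w.exists_boundary_dart {a, b} (by simp) (by simpa using hc)
  simp only [Set.mem_insert_iff, Set.mem_singleton_iff, not_or] at hd hdc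
  rcases hd with rfl | rfl
  · exact ⟨d.snd, hdc.1, hdc.2, .inl d.adj⟩
  · exact ⟨d.snd, hdc.1, hdc.2, .inr d.adj⟩

namespace ZigzagAlgebra

section Paths

variable {V : Type} {G : SimpleGraph V}

variable (G) in
abbrev BasisIndex : Type := V ⊕ G.Dart ⊕ V

def BasisIndex.src : BasisIndex G → V
  | .inl a => a
  | .inr (.inl d) => d.fst
  | .inr (.inr a) => a

def BasisIndex.tgt : BasisIndex G → V
  | .inl a => a
  | .inr (.inl d) => d.snd
  | .inr (.inr a) => a

-- Not proved by `rfl`: as `dsimp` lemmas they would rewrite `i.tgt` inside an `if` condition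
-- without updating its `Decidable` instance, which blocks further `simp` steps.
@[simp] theorem BasisIndex.src_inl (a : V) : BasisIndex.src (G := G) (.inl a) = a := by
  simp [BasisIndex.src]

@[simp] theorem BasisIndex.tgt_inl (a : V) : BasisIndex.tgt (G := G) (.inl a) = a := by
  simp [BasisIndex.tgt]

@[simp] theorem BasisIndex.src_arrow (d : G.Dart) :
    BasisIndex.src (G := G) (.inr (.inl d)) = d.fst := by
  simp [BasisIndex.src]

@[simp] theorem BasisIndex.tgt_arrow (d : G.Dart) :
    BasisIndex.tgt (G := G) (.inr (.inl d)) = d.snd := by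
  simp [BasisIndex.tgt]

@[simp] theorem BasisIndex.src_loop (a : V) : BasisIndex.src (G := G) (.inr (.inr a)) = a := by
  simp [BasisIndex.src]

@[simp] theorem BasisIndex.tgt_loop (a : V) : BasisIndex.tgt (G := G) (.inr (.inr a)) = a := by
  simp [BasisIndex.tgt]

end Paths

section Relations

variable {k : Type} [CommRing k] {V : Type} [Fintype V] {G : SimpleGraph V}

variable (k) in
def arrow (d : G.Dart) : ZigzagAlgebra k G :=
  RingQuot.mkAlgHom k (ZigzagRel k G) (zgx k G d.adj)

theorem e_mul_self (a : V) : e k G a * e k G a = e k G a := by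
  simpa [e, map_mul] using RingQuot.mkAlgHom_rel k (ZigzagRel.idem (k := k) (G := G) a)

theorem e_mul_e_of_ne {a b : V} (h : a ≠ b) : e k G a * e k G b = 0 := by
  simpa [e, map_mul] using RingQuot.mkAlgHom_rel k (ZigzagRel.orth (k := k) (G := G) a b h)

theorem sum_e : ∑ a, e k G a = 1 := by
  simpa [e, map_sum] using RingQuot.mkAlgHom_rel k (ZigzagRel.sum_one (k := k) (G := G))

theorem e_snd_mul_arrow (d : G.Dart) : e k G d.snd * arrow k d = arrow k d := by
  simpa [e, arrow, map_mul] using RingQuot.mkAlgHom_rel k (ZigzagRel.target_id (k := k) d.adj)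

theorem arrow_mul_e_fst (d : G.Dart) : arrow k d * e k G d.fst = arrow k d := by
  simpa [e, arrow, map_mul] using RingQuot.mkAlgHom_rel k (ZigzagRel.source_id (k := k) d.adj)

theorem arrow_mul_arrow_eq_zero {d d' : G.Dart} (h : d.snd = d'.fst) (hne : d'.snd ≠ d.fst) :
    arrow k d' * arrow k d = 0 := by
  obtain ⟨⟨a, b⟩, hab⟩ := d
  obtain ⟨⟨b', c⟩, hbc⟩ := d'
  obtain rfl : b = b' := h
  simpa [arrow, map_mul] using RingQuot.mkAlgHom_rel k (ZigzagRel.comp_zero (k := k) hab hbc hne)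

theorem arrow_symm_mul_arrow {d d' : G.Dart} (h : d.fst = d'.fst) :
    arrow k d.symm * arrow k d = arrow k d'.symm * arrow k d' := by
  obtain ⟨⟨a, b⟩, hab⟩ := d
  obtain ⟨⟨a', c⟩, hac⟩ := d'
  obtain rfl : a = a' := h
  simpa [arrow, map_mul] using RingQuot.mkAlgHom_rel k (ZigzagRel.zigzag (k := k) hab hac)

theorem e_mul_e [DecidableEq V] (a b : V) :
    e k G a * e k G b = if a = b then e k G a else 0 := by
  split_ifs with h
  · rw [h, e_mul_self]
  · exact e_mul_e_of_ne h

theorem arrow_mul_arrow_symm_mul_arrow (d : G.Dart) {c : V} (hca : c ≠ d.fst) (hcb : c ≠ d.snd)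
    (hc : G.Adj d.fst c ∨ G.Adj d.snd c) : arrow k d * arrow k d.symm * arrow k d = 0 := by
  rcases hc with hac | hbc
  · let d' : G.Dart := ⟨(d.fst, c), hac⟩
    rw [mul_assoc, arrow_symm_mul_arrow (d := d) (d' := d') rfl, ← mul_assoc,
      arrow_mul_arrow_eq_zero (d := d'.symm) rfl hcb.symm, zero_mul]
  · let d' : G.Dart := ⟨(d.snd, c), hbc⟩
    have h := arrow_symm_mul_arrow (k := k) (d := d.symm) (d' := d') rfl
    rw [d.symm_symm] at h
    rw [h, mul_assoc, arrow_mul_arrow_eq_zero (d' := d') rfl hca, mul_zero]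

variable (k G) in
open Classical in
/-- `ω_a = x_{ba} x_{ab}`, independent of the neighbour `b` by the zigzag relation;
`0` at an isolated vertex. -/
def loop (a : V) : ZigzagAlgebra k G :=
  if h : ∃ d : G.Dart, d.fst = a then arrow k h.choose.symm * arrow k h.choose else 0

theorem loop_fst (d : G.Dart) : loop k G d.fst = arrow k d.symm * arrow k d := by
  classical
  have h : ∃ d' : G.Dart, d'.fst = d.fst := ⟨d, rfl⟩
  rw [loop, dif_pos h]
  exact arrow_symm_mul_arrow h.choose_spec

theorem loop_of_not_exists {a : V} (h : ¬∃ d : G.Dart, d.fst = a) : loop k G a = 0 := by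
  classical
  exact dif_neg h

variable (k G) in
def path : BasisIndex G → ZigzagAlgebra k G
  | .inl a => e k G a
  | .inr (.inl d) => arrow k d
  | .inr (.inr a) => loop k G a

theorem e_tgt_mul_path (i : BasisIndex G) : e k G i.tgt * path k G i = path k G i := by
  rcases i with a | d | a
  · exact e_mul_self a
  · exact e_snd_mul_arrow d
  · by_cases h : ∃ d : G.Dart, d.fst = a
    · obtain ⟨d, rfl⟩ := h
      rw [path, BasisIndex.tgt_loop, loop_fst, ← mul_assoc]
      exact congrArg (· * arrow k d) (e_snd_mul_arrow d.symm)
    · simp [path, loop_of_not_exists h]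

theorem path_mul_e_src (i : BasisIndex G) : path k G i * e k G i.src = path k G i := by
  rcases i with a | d | a
  · exact e_mul_self a
  · exact arrow_mul_e_fst d
  · by_cases h : ∃ d : G.Dart, d.fst = a
    · obtain ⟨d, rfl⟩ := h
      rw [path, BasisIndex.src_loop, loop_fst, mul_assoc, arrow_mul_e_fst]
    · simp [path, loop_of_not_exists h]

theorem e_mul_path [DecidableEq V] (a : V) (i : BasisIndex G) :
    e k G a * path k G i = if i.tgt = a then path k G i else 0 := by
  rw [← e_tgt_mul_path i, ← mul_assoc, e_mul_e]
  split_ifs <;> simp_all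

theorem path_mul_e [DecidableEq V] (i : BasisIndex G) (a : V) :
    path k G i * e k G a = if i.src = a then path k G i else 0 := by
  rw [← path_mul_e_src i, mul_assoc, e_mul_e]
  split_ifs <;> simp_all

theorem path_mul_path_of_ne {i j : BasisIndex G} (h : i.src ≠ j.tgt) :
    path k G i * path k G j = 0 := by
  rw [← path_mul_e_src i, ← e_tgt_mul_path j, mul_assoc, ← mul_assoc (e k G _),
    e_mul_e_of_ne h, zero_mul, mul_zero]

theorem path_mem_span (i : BasisIndex G) : path k G i ∈ Submodule.span k (Set.range (path k G)) :=
  Submodule.subset_span ⟨i, rfl⟩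

theorem ite_path_mem_span (p : Prop) [Decidable p] (i : BasisIndex G) :
    (if p then path k G i else 0) ∈ Submodule.span k (Set.range (path k G)) := by
  split_ifs
  exacts [path_mem_span i, Submodule.zero_mem _]

theorem mul_mem_span_path {y z : ZigzagAlgebra k G}
    (hy : ∀ i, y * path k G i ∈ Submodule.span k (Set.range (path k G)))
    (hz : z ∈ Submodule.span k (Set.range (path k G))) :
    y * z ∈ Submodule.span k (Set.range (path k G)) := by
  refine (Submodule.span_le (p := (Submodule.span k _).comap (LinearMap.mulLeft k y))).2 ?_ hz
  rintro _ ⟨i, rfl⟩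
  exact hy i

theorem arrow_mul_path_mem_span [DecidableEq V]
    (hG : ∀ a b, G.Adj a b → ∃ c, c ≠ a ∧ c ≠ b ∧ (G.Adj a c ∨ G.Adj b c))
    (d : G.Dart) (i : BasisIndex G) :
    arrow k d * path k G i ∈ Submodule.span k (Set.range (path k G)) := by
  change path k G (.inr (.inl d)) * path k G i ∈ _
  rcases i with a | d' | a
  · exact (path_mul_e (k := k) (.inr (.inl d)) a).symm ▸ ite_path_mem_span _ _
  · by_cases h : d.fst = d'.snd
    · by_cases h' : d'.fst = d.snd
      · obtain rfl : d = d'.symm := SimpleGraph.Dart.ext _ _ (Prod.ext h h'.symm)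
        exact loop_fst (k := k) d' ▸ path_mem_span (.inr (.inr d'.fst))
      · rw [path, path, arrow_mul_arrow_eq_zero h.symm (Ne.symm h')]
        exact Submodule.zero_mem _
    · rw [path_mul_path_of_ne (i := .inr (.inl d)) (j := .inr (.inl d')) h]
      exact Submodule.zero_mem _
  · by_cases h : d.fst = a
    · obtain ⟨c, hca, hcb, hc⟩ := hG _ _ d.adj
      subst h
      rw [path, path, loop_fst, ← mul_assoc, arrow_mul_arrow_symm_mul_arrow d hca hcb hc]
      exact Submodule.zero_mem _
    · rw [path_mul_path_of_ne (i := .inr (.inl d)) (j := .inr (.inr a)) h]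
      exact Submodule.zero_mem _

theorem span_range_path [DecidableEq V]
    (hG : ∀ a b, G.Adj a b → ∃ c, c ≠ a ∧ c ≠ b ∧ (G.Adj a c ∨ G.Adj b c)) :
    Submodule.span k (Set.range (path k G)) = ⊤ := by
  set P := Submodule.span k (Set.range (path k G))
  have hmul : ∀ x : FreeAlgebra k (ZigzagGen G), ∀ z ∈ P,
      RingQuot.mkAlgHom k (ZigzagRel k G) x * z ∈ P := by
    intro x
    induction x using FreeAlgebra.induction with
    | grade0 r =>
      intro z hz
      rw [AlgHom.commutes, Algebra.algebraMap_eq_smul_one, smul_one_mul]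
      exact P.smul_mem r hz
    | grade1 g =>
      rcases g with a | ⟨p, h⟩
      · exact fun z => mul_mem_span_path fun i =>
          (e_mul_path (k := k) a i).symm ▸ ite_path_mem_span _ _
      · exact fun z => mul_mem_span_path (arrow_mul_path_mem_span hG ⟨p, h⟩)
    | mul x y hx hy =>
      intro z hz
      rw [map_mul, mul_assoc]
      exact hx _ (hy z hz)
    | add x y hx hy =>
      intro z hz
      rw [map_add, add_mul]
      exact P.add_mem (hx z hz) (hy z hz)
  have hone : (1 : ZigzagAlgebra k G) ∈ P :=
    sum_e (k := k) (G := G) ▸ P.sum_mem fun a _ => path_mem_span (.inl a)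
  refine eq_top_iff.2 fun y _ => ?_
  obtain ⟨x, rfl⟩ := RingQuot.mkAlgHom_surjective k _ y
  simpa using hmul x 1 hone

end Relations

section Representation

variable {k : Type} [CommRing k] {V : Type} [DecidableEq V] {G : SimpleGraph V}

-- Left multiplication by `e_a`, `x_d` and `ω_a`, in the coordinates of the basis `path`.
variable (k) in
def vertexOp (a : V) : Module.End k (BasisIndex G → k) where
  toFun f i := if i.tgt = a then f i else 0
  map_add' f g := by ext i; by_cases h : i.tgt = a <;> simp [h]
  map_smul' c f := by ext i; by_cases h : i.tgt = a <;> simp [h]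

variable (k) in
def arrowOp (d : G.Dart) : Module.End k (BasisIndex G → k) :=
  (LinearMap.proj (.inl d.fst)).smulRight (Pi.single (.inr (.inl d)) 1) +
    (LinearMap.proj (.inr (.inl d.symm))).smulRight (Pi.single (.inr (.inr d.snd)) 1)

variable (k) in
def loopOp (a : V) : Module.End k (BasisIndex G → k) :=
  (LinearMap.proj (.inl a)).smulRight (Pi.single (.inr (.inr a)) 1)

@[simp] theorem vertexOp_apply (a : V) (f : BasisIndex G → k) (i : BasisIndex G) :
    vertexOp k a f i = if i.tgt = a then f i else 0 := rfl

@[simp] theorem arrowOp_apply (d : G.Dart) (f : BasisIndex G → k) :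
    arrowOp k d f = f (.inl d.fst) • Pi.single (.inr (.inl d)) 1 +
      f (.inr (.inl d.symm)) • Pi.single (.inr (.inr d.snd)) 1 := rfl

@[simp] theorem loopOp_apply (a : V) (f : BasisIndex G → k) :
    loopOp k a f = f (.inl a) • Pi.single (.inr (.inr a)) 1 := rfl

variable (k G) in
def generatorOp : ZigzagGen G → Module.End k (BasisIndex G → k)
  | .inl a => vertexOp k a
  | .inr p => arrowOp k ⟨p.1, p.2⟩

theorem lift_generatorOp_zge (a : V) :
    FreeAlgebra.lift k (generatorOp k G) (zge k G a) = vertexOp k a :=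
  FreeAlgebra.lift_ι_apply _ _

theorem lift_generatorOp_zgx {a b : V} (h : G.Adj a b) :
    FreeAlgebra.lift k (generatorOp k G) (zgx k G h) = arrowOp k ⟨(a, b), h⟩ :=
  FreeAlgebra.lift_ι_apply _ _

theorem vertexOp_mul_vertexOp (a b : V) :
    (vertexOp k a : Module.End k (BasisIndex G → k)) * vertexOp k b =
      if a = b then vertexOp k a else 0 := by
  ext f i
  split_ifs with hab
  · subst hab
    by_cases hi : i.tgt = a <;> simp [hi]
  · by_cases hi : i.tgt = a <;> simp [hi, hab]

theorem vertexOp_snd_mul_arrowOp (d : G.Dart) : vertexOp k d.snd * arrowOp k d = arrowOp k d := by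
  ext f (a | d' | a) <;> simp [Pi.single_apply] <;> grind

theorem arrowOp_mul_vertexOp_fst (d : G.Dart) : arrowOp k d * vertexOp k d.fst = arrowOp k d := by
  ext f i
  simp

theorem arrowOp_mul_arrowOp (d d' : G.Dart) :
    arrowOp k d' * arrowOp k d = if d' = d.symm then loopOp k d.fst else 0 := by
  by_cases h : d' = d.symm
  · subst h
    ext f i
    simp
  · have h' : d'.symm ≠ d := fun h' => h (h' ▸ d'.symm_symm.symm)
    ext f i
    simp [h, h']

variable [Fintype V]

theorem sum_vertexOp : ∑ a, vertexOp k a = (1 : Module.End k (BasisIndex G → k)) := by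
  ext f i
  simp [Finset.sum_apply]

theorem lift_generatorOp_rel ⦃x y : FreeAlgebra k (ZigzagGen G)⦄ (h : ZigzagRel k G x y) :
    FreeAlgebra.lift k (generatorOp k G) x = FreeAlgebra.lift k (generatorOp k G) y := by
  induction h <;>
    simp only [map_mul, map_sum, map_zero, map_one, lift_generatorOp_zge, lift_generatorOp_zgx]
  case idem a => rw [vertexOp_mul_vertexOp, if_pos rfl]
  case orth a b hab => rw [vertexOp_mul_vertexOp, if_neg hab]
  case sum_one => exact sum_vertexOp
  case target_id h => exact vertexOp_snd_mul_arrowOp ⟨(_, _), h⟩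
  case source_id h => exact arrowOp_mul_vertexOp_fst ⟨(_, _), h⟩
  case comp_zero hca =>
    rw [arrowOp_mul_arrowOp, if_neg]
    exact fun h => hca (congrArg (·.snd) h)
  case zigzag =>
    rw [arrowOp_mul_arrowOp, arrowOp_mul_arrowOp]
    exact (if_pos rfl).trans (if_pos rfl).symm

variable (k G) in
def rep : ZigzagAlgebra k G →ₐ[k] Module.End k (BasisIndex G → k) :=
  RingQuot.liftAlgHom k ⟨FreeAlgebra.lift k (generatorOp k G), lift_generatorOp_rel⟩

theorem rep_e (a : V) : rep k G (e k G a) = vertexOp k a := by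
  rw [rep, e, RingQuot.liftAlgHom_mkAlgHom_apply, lift_generatorOp_zge]

theorem rep_arrow (d : G.Dart) : rep k G (arrow k d) = arrowOp k d := by
  rw [rep, arrow, RingQuot.liftAlgHom_mkAlgHom_apply, lift_generatorOp_zgx]

theorem rep_path_apply_sum_elim_one_zero (hG : ∀ a, ∃ b, G.Adj a b) (i : BasisIndex G) :
    rep k G (path k G i) (Sum.elim 1 0 : BasisIndex G → k) = Pi.single i 1 := by
  rcases i with a | d | a
  · ext (b | d | b) <;> simp [path, rep_e, Pi.single_apply]
  · ext j; simp [path, rep_arrow]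
  · obtain ⟨b, hab⟩ := hG a
    obtain ⟨d, rfl⟩ : ∃ d : G.Dart, d.fst = a := ⟨⟨(a, b), hab⟩, rfl⟩
    rw [path, loop_fst, map_mul, Module.End.mul_apply, rep_arrow, rep_arrow]
    ext j; simp

theorem linearIndependent_path (hG : ∀ a, ∃ b, G.Adj a b) : LinearIndependent k (path k G) := by
  refine LinearIndependent.of_comp
    ((LinearMap.applyₗ (Sum.elim 1 0 : BasisIndex G → k)).comp (rep k G).toLinearMap) ?_
  convert Pi.linearIndependent_single_one (BasisIndex G) k with i
  simp [rep_path_apply_sum_elim_one_zero hG]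

end Representation

section Corner

variable {k : Type} {V : Type} [Fintype V] [DecidableEq V] {G : SimpleGraph V}

theorem e_mul_path_mul_e [CommRing k] (a b : V) (i : BasisIndex G) :
    e k G a * path k G i * e k G b = if i.tgt = a ∧ i.src = b then path k G i else 0 := by
  rw [e_mul_path]
  split_ifs with h₁ h₂ <;> simp_all [path_mul_e]

theorem range_mulLeft_comp_mulRight_e [CommRing k]
    (hspan : Submodule.span k (Set.range (path k G)) = ⊤) (a b : V) :
    LinearMap.range ((LinearMap.mulLeft k (e k G a)).comp (LinearMap.mulRight k (e k G b))) =
      Submodule.span k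
        (Set.range fun i : {i : BasisIndex G // i.tgt = a ∧ i.src = b} => path k G i) := by
  rw [LinearMap.range_eq_map, ← hspan, Submodule.map_span, ← Set.range_comp]
  apply le_antisymm
  · refine Submodule.span_le.2 ?_
    rintro _ ⟨i, rfl⟩
    simp only [Function.comp_apply, LinearMap.comp_apply, LinearMap.mulLeft_apply,
      LinearMap.mulRight_apply, ← mul_assoc, e_mul_path_mul_e]
    split_ifs with h
    · exact Submodule.subset_span ⟨⟨i, h⟩, rfl⟩
    · exact Submodule.zero_mem _
  · refine Submodule.span_mono ?_
    rintro _ ⟨⟨i, h⟩, rfl⟩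
    exact ⟨i, by simp [← mul_assoc, e_mul_path_mul_e, h]⟩

theorem finrank_range_mulLeft_comp_mulRight_e [Field k] [DecidableRel G.Adj]
    (hspan : Submodule.span k (Set.range (path k G)) = ⊤) (hli : LinearIndependent k (path k G))
    (a b : V) :
    Module.finrank k
      (LinearMap.range ((LinearMap.mulLeft k (e k G a)).comp (LinearMap.mulRight k (e k G b)))) =
      Fintype.card {i : BasisIndex G // i.tgt = a ∧ i.src = b} := by
  rw [range_mulLeft_comp_mulRight_e hspan]
  exact finrank_span_eq_card (hli.comp _ Subtype.val_injective)

theorem card_basisIndex_tgt_src [DecidableRel G.Adj] (a b : V) :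
    Fintype.card {i : BasisIndex G // i.tgt = a ∧ i.src = b} =
      if a = b then 2 else if G.Adj a b then 1 else 0 := by
  rw [Fintype.card_subtype]
  split_ifs with hab hadj
  · subst hab
    rw [Finset.card_eq_two]
    refine ⟨.inl a, .inr (.inr a), Sum.inl_ne_inr, ?_⟩
    ext (c | d | c) <;> simp
    exact fun h => h ▸ d.fst_ne_snd
  · rw [Finset.card_eq_one]
    refine ⟨.inr (.inl ⟨(b, a), hadj.symm⟩), ?_⟩
    ext (c | d | c) <;> simp [SimpleGraph.Dart.ext_iff, Prod.ext_iff, and_comm] <;>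
      exact fun h => h ▸ hab
  · rw [Finset.card_eq_zero, Finset.filter_eq_empty_iff]
    rintro (c | d | c) - ⟨rfl, rfl⟩
    exacts [hab rfl, hadj d.adj.symm, hab rfl]

end Corner

end ZigzagAlgebra

/-- for vertices `a, b` of `Γ`, the subspace `e_a A(Γ) e_b` (the range of
the `ℂ`-linear map `x ↦ e_a * x * e_b`) has dimension `2` if `a = b`, dimension `1` if
`a` and `b` are adjacent, and dimension `0` otherwise. -/
theorem zigzagAlgebra_finrank_corner {V : Type} [Fintype V] [DecidableEq V]
    (G : SimpleGraph V) [DecidableRel G.Adj]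
    (hconn : G.Connected) (hcard : 2 < Fintype.card V) (a b : V) :
    Module.finrank ℂ
      (LinearMap.range
        ((LinearMap.mulLeft ℂ (ZigzagAlgebra.e ℂ G a)).comp
          (LinearMap.mulRight ℂ (ZigzagAlgebra.e ℂ G b)))) =
      if a = b then 2 else if G.Adj a b then 1 else 0 := by
  have : Nontrivial V := Fintype.one_lt_card_iff_nontrivial.1 (by omega)
  rw [ZigzagAlgebra.finrank_range_mulLeft_comp_mulRight_e
    (ZigzagAlgebra.span_range_path fun a b _ => hconn.exists_adj_of_two_lt_card hcard a b)
    (ZigzagAlgebra.linearIndependent_path hconn.preconnected.exists_adj_of_nontrivial),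
    ZigzagAlgebra.card_basisIndex_tgt_src]

end
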